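/- arXiv:2506.04411 — 3 statements merged into one kernel-verified Lean document; each statement's English description precedes it below -/
import Mathlib

section
/- Let S = {(x_i, y_i)}_{i=1}^N be a dataset with C classes each containing at most n_max samples, let f map samples to nonzero vectors in ℝ^d, and define the decoupled contrastive loss L^DCL(f) and the negatives-only supervised contrastive loss L^NSCL(f) (the latter replaces the denominator sum over j ≠ i by the sum over j with y_j ≠ y_i). Then L^NSCL(f) ≤ L^DCL(f) ≤ L^NSCL(f) + log(1 + n_max·e²/(N − n_max)) ≤ L^NSCL(f) + n_max·e²/(N − n_max). -/
/-!
Cosine similarities lie in `[-1, 1]`, so every term `exp (sim u v)` lies in `[e⁻¹, e]`. For each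
anchor, the DCL denominator is the NSCL denominator plus at most `K * n_max` same-class terms,
each at most `e`, while the NSCL denominator has at least `K * (N - n_max)` terms, each at least
`e⁻¹`. Hence the DCL denominator lies between the NSCL one and `1 + n_max e² / (N - n_max)` times
it; averaging the logarithms gives the first two inequalities, and `log (1 + r) ≤ r` the third.
-/

open Finset

section Negatives

variable {ι κ μ : Type*} [Fintype ι] [DecidableEq κ] {y : ι → κ} {m : ℕ}

theorem sum_filter_label_ne_le_sum_filter_ne [DecidableEq ι] {g : ι → ℝ} (hg : ∀ j, 0 ≤ g j)
    (i : ι) :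
    ∑ j ∈ univ.filter (fun j => y j ≠ y i), g j ≤ ∑ j ∈ univ.filter (fun j => j ≠ i), g j :=
  sum_le_sum_of_subset_of_nonneg (monotone_filter_right _ fun _ _ hj h => hj (h ▸ rfl))
    fun j _ _ => hg j

theorem sum_filter_ne_le_sum_filter_label_ne_add [DecidableEq ι]
    (hy : ∀ c, #(univ.filter (fun j => y j = c)) ≤ m) {g : ι → ℝ} {b : ℝ}
    (hg : ∀ j, g j ∈ Set.Icc 0 b) (i : ι) :
    ∑ j ∈ univ.filter (fun j => j ≠ i), g j ≤
      ∑ j ∈ univ.filter (fun j => y j ≠ y i), g j + m * b := by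
  have hb : 0 ≤ b := (hg i).1.trans (hg i).2
  have hsame : ∑ j ∈ univ.filter (fun j => y j = y i), g j ≤ m * b := calc
    _ ≤ #(univ.filter (fun j => y j = y i)) • b := sum_le_card_nsmul _ _ _ fun j _ => (hg j).2
    _ ≤ m * b := by grw [nsmul_eq_mul, hy (y i)]
  calc ∑ j ∈ univ.filter (fun j => j ≠ i), g j
      ≤ ∑ j, g j := sum_le_sum_of_subset_of_nonneg (filter_subset _ _) fun j _ _ => (hg j).1
    _ = ∑ j ∈ univ.filter (fun j => y j ≠ y i), g j +
          ∑ j ∈ univ.filter (fun j => y j = y i), g j := by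
      rw [add_comm, sum_filter_add_sum_filter_not]
    _ ≤ _ := by grw [hsame]

theorem card_sub_mul_le_sum_filter_label_ne (hy : ∀ c, #(univ.filter (fun j => y j = c)) ≤ m)
    {g : ι → ℝ} {a : ℝ} (ha : 0 ≤ a) (hg : ∀ j, a ≤ g j) (i : ι) :
    (Fintype.card ι - m) * a ≤ ∑ j ∈ univ.filter (fun j => y j ≠ y i), g j := by
  have hcard : (Fintype.card ι : ℝ) - m ≤ #(univ.filter (fun j => y j ≠ y i)) := by
    have hsplit := card_filter_add_card_filter_not (s := univ) (fun j => y j = y i)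
    rw [card_univ] at hsplit
    have hsame : (#(univ.filter (fun j => y j = y i)) : ℝ) ≤ m := by exact_mod_cast hy (y i)
    have : (Fintype.card ι : ℝ) = #(univ.filter (fun j => y j = y i)) +
        #(univ.filter (fun j => y j ≠ y i)) := by exact_mod_cast hsplit.symm
    linarith
  calc (Fintype.card ι - m) * a ≤ #(univ.filter (fun j => y j ≠ y i)) * a := by gcongr
    _ ≤ _ := by
      rw [← nsmul_eq_mul]
      exact card_nsmul_le_sum _ _ _ fun j _ => hg j

variable [Fintype μ] [Nonempty μ]

theorem negatives_sum_bounds [DecidableEq ι] (hy : ∀ c, #(univ.filter (fun j => y j = c)) ≤ m)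
    (hm : m < Fintype.card ι) {b : ℝ} (hb : 0 < b) {G : μ → ι → ℝ}
    (hG : ∀ l j, G l j ∈ Set.Icc b⁻¹ b) (i : ι) :
    0 < ∑ l, ∑ j ∈ univ.filter (fun j => y j ≠ y i), G l j ∧
    ∑ l, ∑ j ∈ univ.filter (fun j => y j ≠ y i), G l j ≤
      ∑ l, ∑ j ∈ univ.filter (fun j => j ≠ i), G l j ∧
    ∑ l, ∑ j ∈ univ.filter (fun j => j ≠ i), G l j ≤
      (1 + m * b ^ 2 / (Fintype.card ι - m)) *
        ∑ l, ∑ j ∈ univ.filter (fun j => y j ≠ y i), G l j := by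
  have hm' : (0 : ℝ) < Fintype.card ι - m := by rw [sub_pos]; exact_mod_cast hm
  have hG0 : ∀ l j, G l j ∈ Set.Icc 0 b :=
    fun l j => ⟨(inv_pos.2 hb).le.trans (hG l j).1, (hG l j).2⟩
  set B := ∑ l, ∑ j ∈ univ.filter (fun j => y j ≠ y i), G l j
  set r := m * b ^ 2 / (Fintype.card ι - m)
  have hB : Fintype.card μ * ((Fintype.card ι - m) * b⁻¹) ≤ B := by
    rw [← nsmul_eq_mul, ← card_univ]
    exact card_nsmul_le_sum _ _ _ fun l _ =>
      card_sub_mul_le_sum_filter_label_ne hy (inv_pos.2 hb).le (fun j => (hG l j).1) i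
  have hA : ∑ l, ∑ j ∈ univ.filter (fun j => j ≠ i), G l j ≤ B + Fintype.card μ * (m * b) := by
    grw [sum_le_sum fun l _ => sum_filter_ne_le_sum_filter_label_ne_add hy (hG0 l) i,
      sum_add_distrib, sum_const, card_univ, nsmul_eq_mul]
  -- `r` is the ratio of the same-class bound `m * b` to the other-class bound `(card ι - m) / b`
  have hr : Fintype.card μ * (m * b) = r * (Fintype.card μ * ((Fintype.card ι - m) * b⁻¹)) := by
    simp only [r]
    field_simp
  refine ⟨lt_of_lt_of_le (by positivity) hB,
    sum_le_sum fun l _ => sum_filter_label_ne_le_sum_filter_ne (fun j => (hG0 l j).1) i, ?_⟩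
  calc ∑ l, ∑ j ∈ univ.filter (fun j => j ≠ i), G l j
      ≤ B + r * (Fintype.card μ * ((Fintype.card ι - m) * b⁻¹)) := hr ▸ hA
    _ ≤ B + r * B := by grw [hB]
    _ = (1 + r) * B := by ring

end Negatives

theorem Real.log_div_le_log_div {x a b : ℝ} (hx : 0 < x) (ha : 0 < a) (hab : a ≤ b) :
    Real.log (x / b) ≤ Real.log (x / a) :=
  Real.log_le_log (div_pos hx (ha.trans_le hab)) (div_le_div_of_nonneg_left hx.le ha hab)

noncomputable def contrastiveLoss (K N : ℕ) (s : Fin N → Fin K → Fin K → ℝ)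
    (D : Fin N → Fin K → ℝ) : ℝ :=
  -(1 / ((K : ℝ) ^ 2 * N)) * ∑ l₁ : Fin K, ∑ l₂ : Fin K, ∑ i : Fin N,
    Real.log (Real.exp (s i l₁ l₂) / D i l₁)

section Loss

variable {K N : ℕ} {s : Fin N → Fin K → Fin K → ℝ} {D D' : Fin N → Fin K → ℝ}

theorem contrastiveLoss_mono (hD : ∀ i l, 0 < D i l) (h : ∀ i l, D i l ≤ D' i l) :
    contrastiveLoss K N s D ≤ contrastiveLoss K N s D' := by
  unfold contrastiveLoss
  simp only [neg_mul, neg_le_neg_iff]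
  gcongr _ * ∑ l₁, ∑ l₂, ∑ i, ?_ with l₁ _ l₂ _ i _
  exact Real.log_div_le_log_div (Real.exp_pos _) (hD i l₁) (h i l₁)

theorem contrastiveLoss_le_add_log {r : ℝ} (hr : 0 ≤ r) (hD : ∀ i l, 0 < D i l)
    (hD' : ∀ i l, 0 < D' i l) (h : ∀ i l, D' i l ≤ (1 + r) * D i l) :
    contrastiveLoss K N s D' ≤ contrastiveLoss K N s D + Real.log (1 + r) := by
  have hterm : ∀ i l₁ l₂, Real.log (Real.exp (s i l₁ l₂) / D i l₁) - Real.log (1 + r) ≤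
      Real.log (Real.exp (s i l₁ l₂) / D' i l₁) := by
    intro i l₁ l₂
    rw [← Real.log_div (div_pos (Real.exp_pos _) (hD i l₁)).ne' (by positivity), div_div,
      mul_comm]
    exact Real.log_div_le_log_div (Real.exp_pos _) (hD' i l₁) (h i l₁)
  have hmean : 1 / ((K : ℝ) ^ 2 * N) * (K ^ 2 * N) ≤ 1 := by
    rw [one_div]; exact inv_mul_le_one_of_le₀ le_rfl (by positivity)
  calc contrastiveLoss K N s D'
      ≤ -(1 / ((K : ℝ) ^ 2 * N)) * ∑ l₁ : Fin K, ∑ l₂ : Fin K, ∑ i : Fin N,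
          (Real.log (Real.exp (s i l₁ l₂) / D i l₁) - Real.log (1 + r)) := by
        unfold contrastiveLoss
        simp only [neg_mul, neg_le_neg_iff]
        gcongr with l₁ _ l₂ _ i _
        exact hterm i l₁ l₂
    _ = contrastiveLoss K N s D + 1 / ((K : ℝ) ^ 2 * N) * (K ^ 2 * N) * Real.log (1 + r) := by
        simp only [contrastiveLoss, sum_sub_distrib, sum_const, card_univ, Fintype.card_fin,
          nsmul_eq_mul]
        ring
    _ ≤ _ := by
        gcongr
        exact mul_le_of_le_one_left (Real.log_nonneg (by linarith)) hmean

end Loss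

open Finset in
theorem dcl_nscl_duality_general (d K N n_max C : ℕ) (hK : 0 < K)
    (hnN : n_max < N)
    (z : Fin N → Fin K → EuclideanSpace ℝ (Fin d))
    (y : Fin N → Fin C)
    (hclass : ∀ c : Fin C, (univ.filter (fun i => y i = c)).card ≤ n_max)
    (sim : EuclideanSpace ℝ (Fin d) → EuclideanSpace ℝ (Fin d) → ℝ)
    (hsim : ∀ u v, sim u v = (inner ℝ u v : ℝ) / (‖u‖ * ‖v‖))
    (LDCL LNSCL : ℝ)
    (hDCL : LDCL = -(1 / ((K : ℝ) ^ 2 * N)) * ∑ l₁ : Fin K, ∑ l₂ : Fin K, ∑ i : Fin N,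
      Real.log (Real.exp (sim (z i l₁) (z i l₂)) /
        (∑ l₃ : Fin K, ∑ j ∈ univ.filter (fun j => j ≠ i),
          Real.exp (sim (z i l₁) (z j l₃)))))
    (hNSCL : LNSCL = -(1 / ((K : ℝ) ^ 2 * N)) * ∑ l₁ : Fin K, ∑ l₂ : Fin K, ∑ i : Fin N,
      Real.log (Real.exp (sim (z i l₁) (z i l₂)) /
        (∑ l₃ : Fin K, ∑ j ∈ univ.filter (fun j => y j ≠ y i),
          Real.exp (sim (z i l₁) (z j l₃))))) :
    LNSCL ≤ LDCL ∧
      LDCL ≤ LNSCL + Real.log (1 + n_max * (Real.exp 1) ^ 2 / ((N : ℝ) - n_max)) ∧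
      LNSCL + Real.log (1 + n_max * (Real.exp 1) ^ 2 / ((N : ℝ) - n_max)) ≤
        LNSCL + n_max * (Real.exp 1) ^ 2 / ((N : ℝ) - n_max) := by
  have : Nonempty (Fin K) := ⟨⟨0, hK⟩⟩
  have hexp : ∀ u v, Real.exp (sim u v) ∈ Set.Icc (Real.exp 1)⁻¹ (Real.exp 1) := fun u v => by
    obtain ⟨hlo, hhi⟩ := abs_le.mp (hsim u v ▸ abs_real_inner_div_norm_mul_norm_le_one u v)
    exact ⟨Real.exp_neg 1 ▸ Real.exp_le_exp.2 hlo, Real.exp_le_exp.2 hhi⟩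
  have hden := fun i l₁ => negatives_sum_bounds hclass (by simpa using hnN) (Real.exp_pos 1)
    (fun l₃ j => hexp (z i l₁) (z j l₃)) i
  simp only [Fintype.card_fin] at hden
  set r : ℝ := n_max * Real.exp 1 ^ 2 / ((N : ℝ) - n_max)
  have hr : 0 ≤ r := div_nonneg (by positivity) (sub_nonneg.2 (by exact_mod_cast hnN.le))
  subst hDCL hNSCL
  refine ⟨contrastiveLoss_mono (fun i l => (hden i l).1) (fun i l => (hden i l).2.1),
    contrastiveLoss_le_add_log hr (fun i l => (hden i l).1)
      (fun i l => (hden i l).1.trans_le (hden i l).2.1) (fun i l => (hden i l).2.2), ?_⟩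
  gcongr
  linarith [Real.log_le_sub_one_of_pos (by linarith : 0 < 1 + r)]

open Finset in
theorem dcl_nscl_duality (d K N n_max C : ℕ) (hK : 0 < K) (hN : 0 < N)
    (hn : 0 < n_max) (hnN : n_max < N)
    (z : Fin N → Fin K → EuclideanSpace ℝ (Fin d))
    (hz : ∀ i l, z i l ≠ 0)
    (y : Fin N → Fin C)
    (hclass : ∀ c : Fin C, (univ.filter (fun i => y i = c)).card ≤ n_max)
    (sim : EuclideanSpace ℝ (Fin d) → EuclideanSpace ℝ (Fin d) → ℝ)
    (hsim : ∀ u v, sim u v = (inner ℝ u v : ℝ) / (‖u‖ * ‖v‖))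
    (LDCL LNSCL : ℝ)
    (hDCL : LDCL = -(1 / ((K : ℝ) ^ 2 * N)) * ∑ l₁ : Fin K, ∑ l₂ : Fin K, ∑ i : Fin N,
      Real.log (Real.exp (sim (z i l₁) (z i l₂)) /
        (∑ l₃ : Fin K, ∑ j ∈ univ.filter (fun j => j ≠ i),
          Real.exp (sim (z i l₁) (z j l₃)))))
    (hNSCL : LNSCL = -(1 / ((K : ℝ) ^ 2 * N)) * ∑ l₁ : Fin K, ∑ l₂ : Fin K, ∑ i : Fin N,
      Real.log (Real.exp (sim (z i l₁) (z i l₂)) /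
        (∑ l₃ : Fin K, ∑ j ∈ univ.filter (fun j => y j ≠ y i),
          Real.exp (sim (z i l₁) (z j l₃))))) :
    LNSCL ≤ LDCL ∧
      LDCL ≤ LNSCL + Real.log (1 + n_max * (Real.exp 1) ^ 2 / ((N : ℝ) - n_max)) ∧
      LNSCL + Real.log (1 + n_max * (Real.exp 1) ^ 2 / ((N : ℝ) - n_max)) ≤
        LNSCL + n_max * (Real.exp 1) ^ 2 / ((N : ℝ) - n_max) :=
  dcl_nscl_duality_general d K N n_max C hK hnN z y hclass sim hsim LDCL LNSCL hDCL hNSCL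
end

section
/- The difference L^DCL(f) − L^NSCL(f) equals (1/N) ∑_{i=1}^N log(1 + Z_i^{pos∖self}/Z_i^{neg}), where Z_i^{pos∖self} = ∑_{l₃} ∑_{j ≠ i, y_j = y_i} exp(sim(z_i^{l₁}, z_j^{l₃})) and Z_i^{neg} = ∑_{l₃} ∑_{j : y_j ≠ y_i} exp(sim(z_i^{l₁}, z_j^{l₃})); in particular L^DCL(f) ≥ L^NSCL(f). -/
/-!
Every other sample is either a positive (same label) or a negative, so the DCL denominator is
`Z^{pos∖self} + Z^{neg}` while the NSCL denominator is `Z^{neg}`. The numerators cancel in the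
difference of the logarithms, leaving `log ((Z^{pos∖self} + Z^{neg}) / Z^{neg})`, which does not
depend on `l₂`; averaging over `l₂` therefore removes one factor `K`. Each of these logarithms
is of a number `≥ 1`, which gives the inequality.
-/

open Finset Real

theorem Real.log_div_add_sub_log_div {e a b : ℝ} (he : e ≠ 0) (hb : b ≠ 0) (hab : a + b ≠ 0) :
    log (e / (a + b)) - log (e / b) = -log (1 + a / b) := by
  rw [one_add_div hb, add_comm b, log_div hab hb, log_div he hab, log_div he hb]
  ring

theorem Finset.sum_filter_ne_eq_sum_same_label_add_sum_diff_label {ι β M : Type*} [Fintype ι]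
    [DecidableEq ι] [DecidableEq β] [AddCommMonoid M] (y : ι → β) (i : ι) (f : ι → M) :
    ∑ j ∈ univ.filter (fun j => j ≠ i), f j =
      ∑ j ∈ univ.filter (fun j => j ≠ i ∧ y j = y i), f j +
        ∑ j ∈ univ.filter (fun j => y j ≠ y i), f j := by
  have hdiff : univ.filter (fun j => y j ≠ y i) =
      (univ.filter (fun j => j ≠ i)).filter (fun j => ¬y j = y i) := by
    rw [filter_filter]
    exact filter_congr fun j _ => ⟨fun h => ⟨fun hji => h (hji ▸ rfl), h⟩, And.right⟩
  rw [hdiff, ← filter_filter, sum_filter_add_sum_filter_not]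

theorem sum_log_div_add_sub_sum_log_div {ι κ : Type*} [Fintype ι] [Fintype κ]
    (p : κ → κ → ι → ℝ) (a b : κ → ι → ℝ) (hp : ∀ l₁ l₂ i, p l₁ l₂ i ≠ 0)
    (ha : ∀ l i, 0 ≤ a l i) (hb : ∀ l i, 0 < b l i) :
    ∑ l₁, ∑ l₂, ∑ i, log (p l₁ l₂ i / (a l₁ i + b l₁ i)) -
        ∑ l₁, ∑ l₂, ∑ i, log (p l₁ l₂ i / b l₁ i) =
      -(Fintype.card κ * ∑ l, ∑ i, log (1 + a l i / b l i)) := by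
  simp only [← sum_sub_distrib]
  simp_rw [log_div_add_sub_log_div (hp _ _ _) (hb _ _).ne' (add_pos_of_nonneg_of_pos (ha _ _)
    (hb _ _)).ne', sum_neg_distrib, sum_const, card_univ, nsmul_eq_mul, mul_sum]

theorem div_sq_mul_eq_one_div_mul {F : Type*} [Field F] (a b : F) :
    a / (a ^ 2 * b) = 1 / (a * b) := by
  rcases eq_or_ne a 0 with rfl | ha
  · simp
  · field_simp

open Finset in
theorem dcl_sub_nscl_eq_general (d K N C : ℕ)
    (z : Fin N → Fin K → EuclideanSpace ℝ (Fin d))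
    (y : Fin N → Fin C)
    (sim : EuclideanSpace ℝ (Fin d) → EuclideanSpace ℝ (Fin d) → ℝ)
    (LDCL LNSCL : ℝ)
    (hDCL : LDCL = -(1 / ((K : ℝ) ^ 2 * N)) * ∑ l₁ : Fin K, ∑ l₂ : Fin K, ∑ i : Fin N,
      Real.log (Real.exp (sim (z i l₁) (z i l₂)) /
        (∑ l₃ : Fin K, ∑ j ∈ univ.filter (fun j => j ≠ i),
          Real.exp (sim (z i l₁) (z j l₃)))))
    (hNSCL : LNSCL = -(1 / ((K : ℝ) ^ 2 * N)) * ∑ l₁ : Fin K, ∑ l₂ : Fin K, ∑ i : Fin N,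
      Real.log (Real.exp (sim (z i l₁) (z i l₂)) /
        (∑ l₃ : Fin K, ∑ j ∈ univ.filter (fun j => y j ≠ y i),
          Real.exp (sim (z i l₁) (z j l₃)))))
    (hneg : ∀ i : Fin N, ∃ j : Fin N, y j ≠ y i) :
    LDCL - LNSCL = (1 / ((K : ℝ) * N)) * ∑ l₁ : Fin K, ∑ i : Fin N,
      Real.log (1 +
        (∑ l₃ : Fin K, ∑ j ∈ univ.filter (fun j => j ≠ i ∧ y j = y i),
          Real.exp (sim (z i l₁) (z j l₃))) /
        (∑ l₃ : Fin K, ∑ j ∈ univ.filter (fun j => y j ≠ y i),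
          Real.exp (sim (z i l₁) (z j l₃)))) ∧
    LNSCL ≤ LDCL := by
  set Zpos : Fin K → Fin N → ℝ := fun l₁ i => ∑ l₃ : Fin K,
    ∑ j ∈ univ.filter (fun j => j ≠ i ∧ y j = y i), exp (sim (z i l₁) (z j l₃))
  set Zneg : Fin K → Fin N → ℝ := fun l₁ i => ∑ l₃ : Fin K,
    ∑ j ∈ univ.filter (fun j => y j ≠ y i), exp (sim (z i l₁) (z j l₃))
  have hZpos : ∀ l i, 0 ≤ Zpos l i := fun _ _ => by positivity
  have hZneg : ∀ l i, 0 < Zneg l i := fun l i => by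
    obtain ⟨j, hj⟩ := hneg i
    exact sum_pos (fun _ _ => sum_pos (fun _ _ => exp_pos _) ⟨j, by simpa using hj⟩)
      ⟨l, mem_univ l⟩
  have hDCL_denom : ∀ l₁ i, ∑ l₃ : Fin K, ∑ j ∈ univ.filter (fun j => j ≠ i),
      exp (sim (z i l₁) (z j l₃)) = Zpos l₁ i + Zneg l₁ i := fun l₁ i => by
    simp only [Zpos, Zneg, ← sum_add_distrib,
      ← sum_filter_ne_eq_sum_same_label_add_sum_diff_label y]
  have hdiff : LDCL - LNSCL = 1 / (K * N) * ∑ l, ∑ i, log (1 + Zpos l i / Zneg l i) := by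
    rw [hDCL, hNSCL, ← mul_sub]
    simp only [hDCL_denom]
    rw [sum_log_div_add_sub_sum_log_div _ Zpos Zneg (fun _ _ _ => exp_ne_zero _) hZpos hZneg,
      Fintype.card_fin, ← div_sq_mul_eq_one_div_mul (K : ℝ)]
    ring
  refine ⟨hdiff, sub_nonneg.1 (hdiff ▸ ?_)⟩
  exact mul_nonneg (by positivity) (sum_nonneg fun l _ => sum_nonneg fun i _ =>
    log_nonneg (le_add_of_nonneg_right (div_nonneg (hZpos l i) (hZneg l i).le)))

open Finset in
theorem dcl_sub_nscl_eq (d K N C : ℕ) (hK : 0 < K) (hN : 0 < N)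
    (z : Fin N → Fin K → EuclideanSpace ℝ (Fin d))
    (hz : ∀ i l, z i l ≠ 0)
    (y : Fin N → Fin C)
    (sim : EuclideanSpace ℝ (Fin d) → EuclideanSpace ℝ (Fin d) → ℝ)
    (hsim : ∀ u v, sim u v = (inner ℝ u v : ℝ) / (‖u‖ * ‖v‖))
    (LDCL LNSCL : ℝ)
    (hDCL : LDCL = -(1 / ((K : ℝ) ^ 2 * N)) * ∑ l₁ : Fin K, ∑ l₂ : Fin K, ∑ i : Fin N,
      Real.log (Real.exp (sim (z i l₁) (z i l₂)) /
        (∑ l₃ : Fin K, ∑ j ∈ univ.filter (fun j => j ≠ i),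
          Real.exp (sim (z i l₁) (z j l₃)))))
    (hNSCL : LNSCL = -(1 / ((K : ℝ) ^ 2 * N)) * ∑ l₁ : Fin K, ∑ l₂ : Fin K, ∑ i : Fin N,
      Real.log (Real.exp (sim (z i l₁) (z i l₂)) /
        (∑ l₃ : Fin K, ∑ j ∈ univ.filter (fun j => y j ≠ y i),
          Real.exp (sim (z i l₁) (z j l₃)))))
    (hneg : ∀ i : Fin N, ∃ j : Fin N, y j ≠ y i) :
    LDCL - LNSCL = (1 / ((K : ℝ) * N)) * ∑ l₁ : Fin K, ∑ i : Fin N,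
      Real.log (1 +
        (∑ l₃ : Fin K, ∑ j ∈ univ.filter (fun j => j ≠ i ∧ y j = y i),
          Real.exp (sim (z i l₁) (z j l₃))) /
        (∑ l₃ : Fin K, ∑ j ∈ univ.filter (fun j => y j ≠ y i),
          Real.exp (sim (z i l₁) (z j l₃)))) ∧
    LNSCL ≤ LDCL :=
  dcl_sub_nscl_eq_general d K N C z y sim LDCL LNSCL hDCL hNSCL hneg
end

section
/- Let C ≥ 2, let z₁, …, z_N ∈ ℝ^d (N = Cn, d ≥ C − 1) with ‖z_i‖ ≤ 1, labels y with n samples per class, and class means μ_c = (1/n) ∑_{i:y_i=c} z_i. Define Q(Z) = −(1/N) ∑_i ‖z_i‖² + (1/N) ∑_i log(∑_{j:y_j≠y_i} exp(⟨z_i, z_j⟩)). Then Q(Z) ≥ log(n(C−1)) − 1 − 1/(C−1). -/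
/-!
By Jensen's inequality for `exp`, each log-sum-exp term is at least `log m` plus the mean of its
`m = (C - 1) n` exponents. Summing the exponents over all samples gives the inner products across
different classes, which equal `‖∑ zᵢ‖² - ∑_c ‖∑_{y i = c} zᵢ‖² ≥ -C n²` since each class sum
has norm at most `n`. Dividing by `N m` gives `-1 / (C - 1)`, and `‖zᵢ‖² ≤ 1` bounds the first
term by `-1`.
-/

open Finset

theorem log_card_add_mean_le_log_sum_exp {ι : Type*} {t : Finset ι} (ht : t.Nonempty) (a : ι → ℝ) :
    Real.log #t + (∑ j ∈ t, a j) / #t ≤ Real.log (∑ j ∈ t, Real.exp (a j)) := by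
  have hcard : (0 : ℝ) < #t := by exact_mod_cast ht.card_pos
  have hJensen := convexOn_exp.map_sum_le (t := t) (w := fun _ => (#t : ℝ)⁻¹) (p := a)
    (fun _ _ => by positivity) (by simp [hcard.ne']) (fun _ _ => Set.mem_univ _)
  simp only [smul_eq_mul, inv_mul_eq_div, ← sum_div] at hJensen
  calc Real.log #t + (∑ j ∈ t, a j) / #t
      = Real.log (#t * Real.exp ((∑ j ∈ t, a j) / #t)) := by
        rw [Real.log_mul hcard.ne' (Real.exp_ne_zero _), Real.log_exp]
    _ ≤ Real.log (∑ j ∈ t, Real.exp (a j)) :=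
        Real.log_le_log (by positivity) (by rwa [← le_div_iff₀' hcard])

theorem card_mul_log_add_sum_div_le_sum_log_sum_exp {ι β : Type*} [Fintype ι]
    {t : ι → Finset β} {m : ℕ} (hm : 0 < m) (ht : ∀ i, #(t i) = m) (a : ι → β → ℝ) :
    Fintype.card ι * Real.log m + (∑ i, ∑ j ∈ t i, a i j) / m
      ≤ ∑ i, Real.log (∑ j ∈ t i, Real.exp (a i j)) := by
  calc Fintype.card ι * Real.log m + (∑ i, ∑ j ∈ t i, a i j) / m
      = ∑ i, (Real.log #(t i) + (∑ j ∈ t i, a i j) / #(t i)) := by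
        simp only [ht, sum_add_distrib, sum_div, sum_const, card_univ, nsmul_eq_mul]
    _ ≤ _ := sum_le_sum fun i _ =>
        log_card_add_mean_le_log_sum_exp (card_pos.mp (ht i ▸ hm)) (a i)

section Labels

variable {ι κ : Type*} [Fintype ι] [Fintype κ] [DecidableEq κ] (y : ι → κ)

theorem card_filter_label_ne_of_balanced {n : ℕ} (hbal : ∀ c, #(univ.filter (fun i => y i = c)) = n)
    (c : κ) : #(univ.filter (fun j => y j ≠ c)) = (Fintype.card κ - 1) * n := by
  have hcard : Fintype.card ι = Fintype.card κ * n := by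
    rw [← card_univ, card_eq_sum_card_fiberwise (fun i _ => mem_univ (y i))]
    simp [hbal]
  have hsplit := card_filter_add_card_filter_not (s := univ) (fun j => y j = c)
  rw [hbal, card_univ, hcard] at hsplit
  simp only [ne_eq, Nat.sub_one_mul]
  omega

variable {E : Type*} [NormedAddCommGroup E] [InnerProductSpace ℝ E] (z : ι → E)

theorem sum_sum_inner_label_ne_eq :
    ∑ i, ∑ j ∈ univ.filter (fun j => y j ≠ y i), inner ℝ (z i) (z j)
      = ‖∑ i, z i‖ ^ 2 - ∑ c, ‖∑ i ∈ univ.filter (fun i => y i = c), z i‖ ^ 2 := by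
  have hsame : ∑ i, ∑ j ∈ univ.filter (fun j => y j = y i), inner ℝ (z i) (z j)
      = ∑ c, ‖∑ i ∈ univ.filter (fun i => y i = c), z i‖ ^ 2 := by
    rw [← sum_fiberwise univ y]
    refine sum_congr rfl fun c _ => ?_
    rw [← real_inner_self_eq_norm_sq, sum_inner]
    refine sum_congr rfl fun i hi => ?_
    rw [(mem_filter.mp hi).2, inner_sum]
  have hall : ∑ i, ∑ j, inner ℝ (z i) (z j) = ‖∑ i, z i‖ ^ 2 := by
    simp_rw [← real_inner_self_eq_norm_sq, sum_inner, inner_sum]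
  rw [← hsame, ← hall, ← sum_sub_distrib]
  refine sum_congr rfl fun i _ => ?_
  rw [← sum_filter_add_sum_filter_not univ (fun j => y j = y i)]
  simp

theorem neg_sum_sq_card_le_sum_sum_inner_label_ne (hz : ∀ i, ‖z i‖ ≤ 1) :
    -∑ c, (#(univ.filter (fun i => y i = c)) : ℝ) ^ 2
      ≤ ∑ i, ∑ j ∈ univ.filter (fun j => y j ≠ y i), inner ℝ (z i) (z j) := by
  have hclass (c : κ) : ‖∑ i ∈ univ.filter (fun i => y i = c), z i‖
      ≤ #(univ.filter (fun i => y i = c)) :=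
    (norm_sum_le _ _).trans (by simpa using sum_le_sum fun i (_ : i ∈ _) => hz i)
  rw [sum_sum_inner_label_ne_eq]
  have := sum_le_sum fun c (_ : c ∈ univ) => pow_le_pow_left₀ (norm_nonneg _) (hclass c) 2
  nlinarith [sq_nonneg ‖∑ i, z i‖]

end Labels

theorem log_sub_one_sub_inv_le_of_sum_bounds {C n A B L : ℝ} (hC : 1 < C) (hn : 0 < n)
    (hA : A ≤ C * n) (hB : -(C * n ^ 2) ≤ B)
    (hL : C * n * Real.log ((C - 1) * n) + B / ((C - 1) * n) ≤ L) :
    Real.log (n * (C - 1)) - 1 - 1 / (C - 1) ≤ -(1 / (C * n)) * A + 1 / (C * n) * L := by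
  have hC1 : 0 < C - 1 := sub_pos.mpr hC
  have hmean : -(C * n / (C - 1)) ≤ B / ((C - 1) * n) := by
    rw [le_div_iff₀ (by positivity)]
    have : -(C * n / (C - 1)) * ((C - 1) * n) = -(C * n ^ 2) := by field_simp
    linarith
  rw [mul_comm n, ← sub_nonneg]
  have hsplit : -(1 / (C * n)) * A + 1 / (C * n) * L - (Real.log ((C - 1) * n) - 1 - 1 / (C - 1))
      = (L - (C * n * Real.log ((C - 1) * n) - C * n / (C - 1)) + (C * n - A)) / (C * n) := by
    field_simp
    ring
  rw [hsplit]
  exact div_nonneg (by linarith) (by positivity)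

open Finset in
theorem nscl_unconstrained_lower_bound_general (d N C n : ℕ) (hC : 2 ≤ C) (hn : 0 < n)
    (hN : N = C * n)
    (z : Fin N → EuclideanSpace ℝ (Fin d)) (hz : ∀ i, ‖z i‖ ≤ 1)
    (y : Fin N → Fin C)
    (hbal : ∀ c : Fin C, (univ.filter (fun i => y i = c)).card = n) :
    -(1 / (N : ℝ)) * ∑ i, ‖z i‖ ^ 2 +
      (1 / (N : ℝ)) * ∑ i : Fin N,
        Real.log (∑ j ∈ univ.filter (fun j => y j ≠ y i), Real.exp (inner ℝ (z i) (z j) : ℝ))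
      ≥ Real.log (n * ((C : ℝ) - 1)) - 1 - 1 / ((C : ℝ) - 1) := by
  have hnegatives : ∀ i, #(univ.filter (fun j => y j ≠ y i)) = (C - 1) * n := fun i => by
    simpa using card_filter_label_ne_of_balanced y hbal (y i)
  have hjensen := card_mul_log_add_sum_div_le_sum_log_sum_exp
    (Nat.mul_pos (by omega) hn) hnegatives fun i j => inner ℝ (z i) (z j)
  have hcross := neg_sum_sq_card_le_sum_sum_inner_label_ne y z hz
  have hnorms : ∑ i, ‖z i‖ ^ 2 ≤ N := by
    simpa using sum_le_sum fun i (_ : i ∈ univ) => pow_le_one₀ (norm_nonneg (z i)) (hz i)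
  simp only [hbal, sum_const, card_univ, Fintype.card_fin, nsmul_eq_mul] at hcross hjensen
  rw [Nat.cast_mul, Nat.cast_sub (by omega : 1 ≤ C), Nat.cast_one] at hjensen
  subst hN
  push_cast at hjensen hnorms ⊢
  exact log_sub_one_sub_inv_le_of_sum_bounds (by exact_mod_cast hC) (by exact_mod_cast hn)
    hnorms hcross hjensen

open Finset in
theorem nscl_unconstrained_lower_bound (d N C n : ℕ) (hC : 2 ≤ C) (hn : 0 < n)
    (hN : N = C * n) (hd : C - 1 ≤ d)
    (z : Fin N → EuclideanSpace ℝ (Fin d)) (hz : ∀ i, ‖z i‖ ≤ 1)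
    (y : Fin N → Fin C)
    (hbal : ∀ c : Fin C, (univ.filter (fun i => y i = c)).card = n) :
    -(1 / (N : ℝ)) * ∑ i, ‖z i‖ ^ 2 +
      (1 / (N : ℝ)) * ∑ i : Fin N,
        Real.log (∑ j ∈ univ.filter (fun j => y j ≠ y i), Real.exp (inner ℝ (z i) (z j) : ℝ))
      ≥ Real.log (n * ((C : ℝ) - 1)) - 1 - 1 / ((C : ℝ) - 1) :=
  nscl_unconstrained_lower_bound_general d N C n hC hn hN z hz y hbal
end
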